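/- Marginal coverage of split conformal prediction: let (X_1, Y_1), …, (X_n, Y_n), (X_{n+1}, Y_{n+1}) be an exchangeable sequence of random pairs (their joint distribution is invariant under every permutation of the n+1 indices), let s be a measurable non-conformity score function, and let α ∈ (0,1) satisfy ⌈(n+1)(1−α)⌉ ≤ n. Define q̂ as the ⌈(n+1)(1−α)⌉-th smallest value among the calibration scores s(X_1, Y_1), …, s(X_n, Y_n). Then the prediction set C(x) = {y : s(x, y) ≤ q̂} satisfies Pr[Y_{n+1} ∈ C(X_{n+1})] ≥ 1 − α, i.e., Pr[s(X_{n+1}, Y_{n+1}) ≤ q̂] ≥ 1 − α. -/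

import Mathlib

/-! With `S i = s (Z i)` and `k = ⌈(n+1)(1-α)⌉`, the test score is at most `q̂` exactly when
fewer than `k` of the `n+1` scores lie strictly below it. In every outcome at least `k` of the
`n+1` scores have this property (all those up to the `k`-th smallest value), and by
exchangeability every index has it with the same probability `p`; hence
`(n+1) p ≥ k ≥ (n+1)(1-α)`. -/

open MeasureTheory

/-- The `k`-th smallest value (1-indexed `k`-th order statistic) of the finite
family of reals `v : Fin n → ℝ`. -/
noncomputable def kthSmallest {n : ℕ} (v : Fin n → ℝ) (k : ℕ) : ℝ :=
  ((List.ofFn v).mergeSort (· ≤ ·)).getD (k - 1) 0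

open Finset ProbabilityTheory
open scoped ENNReal

theorem List.Pairwise.apply_getElem_iff_lt_countP {α : Type*} [Preorder α] {l : List α}
    (hl : l.Pairwise (· ≤ ·)) {p : α → Prop} [DecidablePred p] (hp : Antitone p)
    {i : ℕ} (hi : i < l.length) :
    p l[i] ↔ i < l.countP p := by
  induction l generalizing i with
  | nil => simp at hi
  | cons a t ih =>
    obtain ⟨ha, ht⟩ := List.pairwise_cons.mp hl
    by_cases hpa : p a
    · cases i with
      | zero => simp [hpa]
      | succ i => simpa [hpa] using ih ht (by simpa using hi)
    · have hpt : ∀ y ∈ t, ¬ p y := fun y hy hy' => hpa (hp (ha y hy) hy')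
      have hcount : t.countP p = 0 := List.countP_eq_zero.2 (by simpa using hpt)
      cases i with
      | zero => simp [hpa, hcount]
      | succ i => simp [hpa, hcount, hpt _ (List.getElem_mem _)]

theorem List.countP_ofFn {α : Type*} {m : ℕ} (v : Fin m → α) (p : α → Prop) [DecidablePred p] :
    (List.ofFn v).countP p = #{i | p (v i)} := by
  rw [List.ofFn_eq_map, List.countP_map, Finset.card_def, Finset.filter_val, Fin.univ_def]
  simp only [← Multiset.countP_eq_card_filter, Multiset.coe_countP]
  rfl

theorem apply_kthSmallest_iff {m k : ℕ} (v : Fin m → ℝ) (hk1 : 1 ≤ k) (hkm : k ≤ m)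
    {p : ℝ → Prop} [DecidablePred p] (hp : Antitone p) :
    p (kthSmallest v k) ↔ k ≤ #{i | p (v i)} := by
  set l := (List.ofFn v).mergeSort (· ≤ ·)
  have hperm : l.Perm (List.ofFn v) := List.mergeSort_perm _ _
  have hlen : k - 1 < l.length := by rw [hperm.length_eq, List.length_ofFn]; omega
  rw [kthSmallest, List.getD_eq_getElem _ _ hlen,
    (List.pairwise_mergeSort' _ _).apply_getElem_iff_lt_countP hp hlen,
    hperm.countP_eq, List.countP_ofFn]
  omega

theorem le_kthSmallest_iff {m k : ℕ} (v : Fin m → ℝ) (hk1 : 1 ≤ k) (hkm : k ≤ m) (x : ℝ) :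
    x ≤ kthSmallest v k ↔ #{i | v i < x} < k := by
  rw [← not_lt, apply_kthSmallest_iff v hk1 hkm (p := (· < x)) fun _ _ hab h => hab.trans_lt h,
    not_le]

theorem le_card_filter_le_kthSmallest {m k : ℕ} (v : Fin m → ℝ) (hk1 : 1 ≤ k) (hkm : k ≤ m) :
    k ≤ #{i | v i ≤ kthSmallest v k} :=
  (apply_kthSmallest_iff v hk1 hkm fun _ _ hab h => hab.trans h).1 le_rfl

noncomputable def strictRank {ι : Type*} [Fintype ι] (x : ι → ℝ) (j : ι) : ℕ := #{i | x i < x j}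

theorem strictRank_comp_perm {ι : Type*} [Fintype ι] (x : ι → ℝ) (σ : Equiv.Perm ι) (j : ι) :
    strictRank (x ∘ σ) j = strictRank x (σ j) := by
  simp only [strictRank, card_filter, Function.comp_apply]
  exact Equiv.sum_comp σ fun i => if x i < x (σ j) then 1 else 0

theorem strictRank_last {n : ℕ} (x : Fin (n + 1) → ℝ) :
    strictRank x (Fin.last n) = #{i : Fin n | x i.castSucc < x (Fin.last n)} := by
  rw [strictRank, card_filter, card_filter, Fin.sum_univ_castSucc]
  simp

theorem measurable_strictRank {ι : Type*} [Fintype ι] (j : ι) :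
    Measurable fun x : ι → ℝ => strictRank x j := by
  simp only [strictRank, card_filter]
  exact Finset.measurable_sum _ fun i _ => Measurable.ite
    (measurableSet_lt (measurable_pi_apply i) (measurable_pi_apply j)) measurable_const
    measurable_const

theorem le_card_strictRank_lt {m k : ℕ} (x : Fin m → ℝ) (hkm : k ≤ m) :
    k ≤ #{j | strictRank x j < k} := by
  obtain rfl | hk1 := Nat.eq_zero_or_pos k
  · exact Nat.zero_le _
  convert le_card_filter_le_kthSmallest x hk1 hkm using 3 with j
  exact (le_kthSmallest_iff x hk1 hkm (x j)).symm

open Classical in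
theorem natCast_mul_measure_univ_le_sum_measure {Ω ι : Type*} [MeasurableSpace Ω]
    (μ : Measure Ω) [Fintype ι] {E : ι → Set Ω} (hE : ∀ j, MeasurableSet (E j)) {k : ℕ}
    (hk : ∀ ω, k ≤ #{j | ω ∈ E j}) :
    k * μ Set.univ ≤ ∑ j, μ (E j) :=
  calc k * μ Set.univ = ∫⁻ _, (k : ℝ≥0∞) ∂μ := (lintegral_const _).symm
    _ ≤ ∫⁻ ω, ∑ j, (E j).indicator 1 ω ∂μ := lintegral_mono fun ω => by
        simp only [Set.indicator_apply, Pi.one_apply, ← natCast_card_filter]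
        exact_mod_cast hk ω
    _ = ∑ j, μ (E j) := by
        rw [lintegral_finsetSum _ fun j _ => measurable_one.indicator (hE j)]
        simp only [lintegral_indicator_one (hE _)]

def Exchangeable {Ω ι β : Type*} [MeasurableSpace Ω] [MeasurableSpace β] (μ : Measure Ω)
    (X : ι → Ω → β) : Prop :=
  ∀ σ : Equiv.Perm ι, μ.map (fun ω i => X (σ i) ω) = μ.map (fun ω i => X i ω)

namespace Exchangeable

variable {Ω ι β : Type*} [MeasurableSpace Ω] [MeasurableSpace β] {μ : Measure Ω}
  {X : ι → Ω → β}

theorem comp {γ : Type*} [MeasurableSpace γ] (hX : Exchangeable μ X) (hXm : ∀ i, Measurable (X i))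
    {f : β → γ} (hf : Measurable f) : Exchangeable μ fun i ω => f (X i ω) := by
  intro σ
  have hf' : Measurable fun (x : ι → β) i => f (x i) := by fun_prop
  have hmap : ∀ τ : Equiv.Perm ι, μ.map (fun ω i => f (X (τ i) ω))
      = (μ.map fun ω i => X (τ i) ω).map fun x i => f (x i) := fun τ => by
    rw [Measure.map_map hf' (measurable_pi_lambda _ fun i => hXm (τ i))]
    rfl
  calc μ.map (fun ω i => f (X (σ i) ω))
      = (μ.map fun ω i => X (σ i) ω).map fun x i => f (x i) := hmap σ
    _ = (μ.map fun ω i => X i ω).map fun x i => f (x i) := by rw [hX σ]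
    _ = μ.map (fun ω i => f (X i ω)) := (hmap 1).symm

theorem identDistrib_strictRank [Fintype ι] [DecidableEq ι] {X : ι → Ω → ℝ}
    (hX : Exchangeable μ X) (hXm : ∀ i, Measurable (X i)) (j j' : ι) :
    IdentDistrib (fun ω => strictRank (X · ω) j) (fun ω => strictRank (X · ω) j') μ μ := by
  set σ := Equiv.swap j j'
  have hpaths : IdentDistrib (fun ω i => X (σ i) ω) (fun ω i => X i ω) μ μ :=
    ⟨(measurable_pi_lambda _ fun i => hXm (σ i)).aemeasurable,
      (measurable_pi_lambda _ hXm).aemeasurable, hX σ⟩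
  have hrank : (fun ω => strictRank (X · ω) j)
      = (fun x => strictRank x j') ∘ fun ω i => X (σ i) ω := by
    funext ω
    change _ = strictRank ((X · ω) ∘ σ) j'
    rw [strictRank_comp_perm, Equiv.swap_apply_right]
  rw [hrank]
  exact hpaths.comp (measurable_strictRank j')

theorem natCast_le_mul_measure_strictRank_lt [IsProbabilityMeasure μ] {m k : ℕ}
    {X : Fin m → Ω → ℝ} (hX : Exchangeable μ X) (hXm : ∀ i, Measurable (X i)) (j : Fin m)
    (hkm : k ≤ m) :
    (k : ℝ≥0∞) ≤ m * μ {ω | strictRank (X · ω) j < k} := by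
  have hE : ∀ i, MeasurableSet {ω | strictRank (X · ω) i < k} := fun i =>
    measurableSet_lt ((measurable_strictRank i).comp (measurable_pi_lambda _ hXm))
      measurable_const
  have hequal : ∀ i, μ {ω | strictRank (X · ω) i < k} = μ {ω | strictRank (X · ω) j < k} :=
    fun i => (hX.identDistrib_strictRank hXm i j).measure_mem_eq (s := Set.Iio k) measurableSet_Iio
  calc (k : ℝ≥0∞) = k * μ Set.univ := by simp
    _ ≤ ∑ i, μ {ω | strictRank (X · ω) i < k} :=
        natCast_mul_measure_univ_le_sum_measure μ hE fun ω => by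
          simpa only [Set.mem_ofPred_eq] using le_card_strictRank_lt (X · ω) hkm
    _ = m * μ {ω | strictRank (X · ω) j < k} := by
        simp [hequal]

end Exchangeable

theorem split_conformal_marginal_coverage_general
    {Ω 𝒳 𝒴 : Type*} [MeasurableSpace Ω] [MeasurableSpace 𝒳] [MeasurableSpace 𝒴]
    (μ : Measure Ω) [IsProbabilityMeasure μ]
    {n : ℕ} (Z : Fin (n + 1) → Ω → 𝒳 × 𝒴)
    (hZ : ∀ i, Measurable (Z i))
    (hexch : ∀ σ : Equiv.Perm (Fin (n + 1)),
      Measure.map (fun ω => fun i => Z (σ i) ω) μ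
        = Measure.map (fun ω => fun i => Z i ω) μ)
    (s : 𝒳 × 𝒴 → ℝ) (hs : Measurable s)
    (α : ℝ)
    (hk : ⌈((n : ℝ) + 1) * (1 - α)⌉₊ ≤ n)
    (qhat : Ω → ℝ)
    (hqhat : ∀ ω, qhat ω =
      kthSmallest (fun i : Fin n => s (Z i.castSucc ω)) ⌈((n : ℝ) + 1) * (1 - α)⌉₊) :
    ENNReal.ofReal (1 - α) ≤ μ {ω | s (Z (Fin.last n) ω) ≤ qhat ω} := by
  set k := ⌈((n : ℝ) + 1) * (1 - α)⌉₊
  obtain hα | hα := le_or_gt (1 - α) 0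
  · simp [ENNReal.ofReal_of_nonpos hα]
  have hk1 : 1 ≤ k := Nat.ceil_pos.mpr (by positivity)
  have hevent : {ω | s (Z (Fin.last n) ω) ≤ qhat ω}
      = {ω | strictRank (s <| Z · ω) (Fin.last n) < k} := by
    ext ω
    simp only [Set.mem_ofPred_eq, hqhat, le_kthSmallest_iff _ hk1 hk, strictRank_last]
  have hcover : ((n + 1 : ℕ) : ℝ≥0∞) * ENNReal.ofReal (1 - α) ≤ k := by
    rw [← ENNReal.ofReal_natCast, ← ENNReal.ofReal_mul (by positivity), ← ENNReal.ofReal_natCast k]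
    exact ENNReal.ofReal_le_ofReal (by push_cast; exact Nat.le_ceil _)
  rw [hevent, ← ENNReal.mul_le_mul_iff_right (by simp) (ENNReal.natCast_ne_top (n + 1))]
  exact hcover.trans <| Exchangeable.natCast_le_mul_measure_strictRank_lt
    ((show Exchangeable μ Z from hexch).comp hZ hs) (fun i => hs.comp (hZ i)) _ (by omega)

/-- Marginal coverage of split conformal prediction: for an
exchangeable sequence of random pairs `Z 0, …, Z n` (joint law invariant under
every permutation of the `n+1` indices), a measurable non-conformity score `s`,
and `α ∈ (0,1)` with `⌈(n+1)(1-α)⌉ ≤ n`, letting `q̂` be the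
`⌈(n+1)(1-α)⌉`-th smallest calibration score among `s (Z 0), …, s (Z (n-1))`,
the test score satisfies `Pr[s (Z n) ≤ q̂] ≥ 1-α`, i.e. the prediction set
`C(x) = {y : s (x, y) ≤ q̂}` covers `Y_{n+1}` with probability at least `1-α`. -/
theorem split_conformal_marginal_coverage
    {Ω 𝒳 𝒴 : Type*} [MeasurableSpace Ω] [MeasurableSpace 𝒳] [MeasurableSpace 𝒴]
    [Fintype 𝒴] [Nonempty 𝒴]
    (μ : Measure Ω) [IsProbabilityMeasure μ]
    {n : ℕ} (Z : Fin (n + 1) → Ω → 𝒳 × 𝒴)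
    (hZ : ∀ i, Measurable (Z i))
    (hexch : ∀ σ : Equiv.Perm (Fin (n + 1)),
      Measure.map (fun ω => fun i => Z (σ i) ω) μ
        = Measure.map (fun ω => fun i => Z i ω) μ)
    (s : 𝒳 × 𝒴 → ℝ) (hs : Measurable s)
    (α : ℝ) (hα : α ∈ Set.Ioo (0 : ℝ) 1)
    (hk : ⌈((n : ℝ) + 1) * (1 - α)⌉₊ ≤ n)
    (qhat : Ω → ℝ)
    (hqhat : ∀ ω, qhat ω =
      kthSmallest (fun i : Fin n => s (Z i.castSucc ω)) ⌈((n : ℝ) + 1) * (1 - α)⌉₊) :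
    ENNReal.ofReal (1 - α) ≤ μ {ω | s (Z (Fin.last n) ω) ≤ qhat ω} :=
  split_conformal_marginal_coverage_general μ Z hZ hexch s hs α hk qhat hqhat
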